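/- arXiv:1306.6002 — 11 statements merged into one kernel-verified Lean document; each statement's English description precedes it below -/
import Mathlib

section
/- Let d ≥ 1 and let G be a SIC POVM on ℂ^d. Set t = (1/d)·(1 − 1/√(d+1)). Then for all k ≠ ℓ in Fin (d²) one has Tr[(d•G(k) − t•I)·(d•G(ℓ) − t•I)] = 0, and the d² matrices d•G(k) − t•I form a basis of the complex vector space of d×d complex matrices. -/
open Matrix
open scoped ComplexOrder

/-- A SIC POVM on `ℂ^d`: a family of `d²` positive semidefinite matrices summing to the
identity, with `Tr(G i · G j) = 1/(d²(d+1))` for `i ≠ j` and `Tr((G i)²) = 1/d²`. -/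
def IsSICPOVM (d : ℕ) (G : Fin (d ^ 2) → Matrix (Fin d) (Fin d) ℂ) : Prop :=
  (∀ i, (G i).PosSemidef) ∧ (∑ i, G i = 1) ∧
    (∀ i j, i ≠ j → (G i * G j).trace = 1 / ((d : ℂ) ^ 2 * ((d : ℂ) + 1))) ∧
    (∀ i, (G i * G i).trace = 1 / (d : ℂ) ^ 2)

/-!
Summing `Tr(G i · G j)` over `j` and using `Σ G j = I` gives `Tr(G i) = 1/d`. Hence for
`A k = d • G k - c • I` one gets `Tr(A k · A l) = d² Tr(G k · G l) - 2c + d c²`, which vanishes for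
`k ≠ l` exactly when `d(d+1)c² - 2(d+1)c + 1 = 0`, a quadratic with root `t = sicShift d`; for `k = l` the
same expression equals `d/(d+1) ≠ 0`. So the `A k` are orthogonal and non-isotropic for the
bilinear form `(X, Y) ↦ Tr(X Y)`, hence linearly independent, and there are `d² = dim` of them.
-/

namespace Matrix

variable {n : Type*} [Fintype n] [DecidableEq n]

theorem trace_smul_sub_smul_one_mul {R : Type*} [CommRing R] (a c : R) (X Y : Matrix n n R) :
    ((a • X - c • 1) * (a • Y - c • 1)).trace =
      a ^ 2 * (X * Y).trace - a * c * (X.trace + Y.trace) + c ^ 2 * Fintype.card n := by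
  simp only [sub_mul, mul_sub, Matrix.smul_mul, Matrix.mul_smul, trace_sub, trace_smul, smul_smul,
    mul_one, one_mul, trace_one, smul_eq_mul]
  ring

theorem linearIndependent_of_trace_mul {ι K : Type*} [Field K] {A : ι → Matrix n n K}
    (horth : ∀ k l, k ≠ l → (A k * A l).trace = 0) (hself : ∀ k, (A k * A k).trace ≠ 0) :
    LinearIndependent K A :=
  LinearMap.BilinForm.linearIndependent_of_iIsOrtho
    (B := (LinearMap.mul K (Matrix n n K)).compr₂ (traceLinearMap n K K)) horth hself

end Matrix

theorem ne_zero_of_fin_sq {d : ℕ} (i : Fin (d ^ 2)) : d ≠ 0 := by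
  rintro rfl
  exact i.elim0

noncomputable def sicShift (x : ℝ) : ℝ := 1 / x * (1 - 1 / √(x + 1))

theorem sicShift_quadratic {x : ℝ} (hx : 0 < x) :
    x * (x + 1) * sicShift x ^ 2 - 2 * (x + 1) * sicShift x + 1 = 0 := by
  have hs : √(x + 1) ^ 2 = x + 1 := Real.sq_sqrt (by positivity)
  have hs0 : √(x + 1) ≠ 0 := by positivity
  unfold sicShift
  field_simp
  linear_combination (-1 : ℝ) * hs

namespace IsSICPOVM

variable {d : ℕ} {G : Fin (d ^ 2) → Matrix (Fin d) (Fin d) ℂ}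

theorem trace_eq (hG : IsSICPOVM d G) (i : Fin (d ^ 2)) : (G i).trace = 1 / d := by
  obtain ⟨-, hsum, hoff, hdiag⟩ := hG
  have hd : (d : ℂ) ≠ 0 := Nat.cast_ne_zero.mpr (ne_zero_of_fin_sq i)
  calc (G i).trace = ∑ j, (G i * G j).trace := by
        rw [← trace_sum, ← Finset.mul_sum, hsum, mul_one]
    _ = 1 / d ^ 2 + ((d ^ 2 - 1 : ℕ) : ℂ) * (1 / (d ^ 2 * (d + 1))) := by
        rw [← Finset.add_sum_erase _ _ (Finset.mem_univ i), hdiag,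
          Finset.sum_congr rfl fun j hj => hoff i j (Finset.ne_of_mem_erase hj).symm,
          Finset.sum_const, Finset.card_erase_of_mem (Finset.mem_univ i), Finset.card_univ,
          Fintype.card_fin, nsmul_eq_mul]
    _ = 1 / d := by
        rw [Nat.cast_sub (Nat.one_le_pow _ _ (Nat.pos_of_ne_zero (ne_zero_of_fin_sq i)))]
        push_cast
        field_simp
        ring

theorem trace_shifted_mul_shifted (hG : IsSICPOVM d G) (c : ℂ) (k l : Fin (d ^ 2)) :
    (((d : ℂ) • G k - c • 1) * ((d : ℂ) • G l - c • 1)).trace =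
      d ^ 2 * (G k * G l).trace - 2 * c + d * c ^ 2 := by
  have hd : (d : ℂ) ≠ 0 := Nat.cast_ne_zero.mpr (ne_zero_of_fin_sq k)
  rw [trace_smul_sub_smul_one_mul, hG.trace_eq, hG.trace_eq, Fintype.card_fin]
  field_simp
  ring

theorem trace_shifted_mul_shifted_of_ne (hG : IsSICPOVM d G) {c : ℂ}
    (hc : d * (d + 1) * c ^ 2 - 2 * (d + 1) * c + 1 = 0) {k l : Fin (d ^ 2)} (hkl : k ≠ l) :
    (((d : ℂ) • G k - c • 1) * ((d : ℂ) • G l - c • 1)).trace = 0 := by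
  have hd : (d : ℂ) ≠ 0 := Nat.cast_ne_zero.mpr (ne_zero_of_fin_sq k)
  have hd1 : (d : ℂ) + 1 ≠ 0 := by exact_mod_cast d.succ_ne_zero
  rw [hG.trace_shifted_mul_shifted, hG.2.2.1 k l hkl]
  field_simp
  linear_combination hc

theorem trace_shifted_mul_shifted_self (hG : IsSICPOVM d G) {c : ℂ}
    (hc : d * (d + 1) * c ^ 2 - 2 * (d + 1) * c + 1 = 0) (k : Fin (d ^ 2)) :
    (((d : ℂ) • G k - c • 1) * ((d : ℂ) • G k - c • 1)).trace = d / (d + 1) := by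
  have hd : (d : ℂ) ≠ 0 := Nat.cast_ne_zero.mpr (ne_zero_of_fin_sq k)
  have hd1 : (d : ℂ) + 1 ≠ 0 := by exact_mod_cast d.succ_ne_zero
  rw [hG.trace_shifted_mul_shifted, hG.2.2.2 k]
  field_simp
  linear_combination hc

end IsSICPOVM

theorem stmt0 (d : ℕ) (hd : 1 ≤ d) (G : Fin (d ^ 2) → Matrix (Fin d) (Fin d) ℂ)
    (hG : IsSICPOVM d G) :
    (∀ k l : Fin (d ^ 2), k ≠ l →
      ((d • G k - ((1 / (d : ℝ)) * (1 - 1 / Real.sqrt (d + 1))) • (1 : Matrix (Fin d) (Fin d) ℂ)) *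
        (d • G l - ((1 / (d : ℝ)) * (1 - 1 / Real.sqrt (d + 1))) •
          (1 : Matrix (Fin d) (Fin d) ℂ))).trace = 0) ∧
    LinearIndependent ℂ (fun k : Fin (d ^ 2) =>
      d • G k - ((1 / (d : ℝ)) * (1 - 1 / Real.sqrt (d + 1))) •
        (1 : Matrix (Fin d) (Fin d) ℂ)) ∧
    Submodule.span ℂ (Set.range (fun k : Fin (d ^ 2) =>
      d • G k - ((1 / (d : ℝ)) * (1 - 1 / Real.sqrt (d + 1))) •
        (1 : Matrix (Fin d) (Fin d) ℂ))) = ⊤ := by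
  rw [show 1 / (d : ℝ) * (1 - 1 / √(d + 1)) = sicShift d from rfl]
  have hA : ∀ k, d • G k - sicShift d • (1 : Matrix (Fin d) (Fin d) ℂ) =
      (d : ℂ) • G k - (sicShift d : ℂ) • 1 :=
    fun k => by rw [Nat.cast_smul_eq_nsmul, Complex.coe_smul]
  have ht : (d : ℂ) * (d + 1) * (sicShift d : ℂ) ^ 2 - 2 * (d + 1) * sicShift d + 1 = 0 := by
    exact_mod_cast sicShift_quadratic (x := d) (by exact_mod_cast hd)
  have hli : LinearIndependent ℂ fun k => (d : ℂ) • G k - (sicShift d : ℂ) • 1 :=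
    linearIndependent_of_trace_mul (fun k l => hG.trace_shifted_mul_shifted_of_ne ht) fun k => by
      rw [hG.trace_shifted_mul_shifted_self ht]
      exact div_ne_zero (by exact_mod_cast (by omega : d ≠ 0)) (by exact_mod_cast d.succ_ne_zero)
  simp only [hA]
  exact ⟨fun k l => hG.trace_shifted_mul_shifted_of_ne ht, hli,
    hli.span_eq_top_of_card_eq_finrank' (by simp [Module.finrank_matrix, sq])⟩
end

section
/- Let d ≥ 2 and let S be a finite set with |S| = d². Any collection of pairwise distinct d-partitions of S that pairwise share the 1-overlap property has cardinality at most d + 1. -/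
open Finset

/-- A `d`-partition of a finite type with `d²` elements: every fiber has cardinality `d`. -/
def IsDPartition {S : Type*} [Fintype S] [DecidableEq S] (d : ℕ) (c : S → Fin d) : Prop :=
  ∀ ν, (Finset.univ.filter fun a => c a = ν).card = d

/-- Two `d`-partitions share the 1-overlap property. -/
def OneOverlap {S : Type*} [Fintype S] [DecidableEq S] {d : ℕ} (c c' : S → Fin d) : Prop :=
  ∀ ν μ, (Finset.univ.filter fun a => c a = ν ∧ c' a = μ).card = 1

/-- Two functions `c, c'` induce the same partition into fibers. -/
def SameFibers {S : Type*} {d : ℕ} (c c' : S → Fin d) : Prop :=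
  ∀ a b, c a = c b ↔ c' a = c' b

theorem stmt4 (d : ℕ) (hd : 2 ≤ d) (S : Type*) [Fintype S] [DecidableEq S]
    (hS : Fintype.card S = d ^ 2) (P : Finset (S → Fin d))
    (hpart : ∀ c ∈ P, IsDPartition d c)
    (hdist : ∀ c ∈ P, ∀ c' ∈ P, c ≠ c' → ¬ SameFibers c c')
    (hov : ∀ c ∈ P, ∀ c' ∈ P, c ≠ c' → OneOverlap c c') :
    P.card ≤ d + 1 := by
  have hne : Nonempty S := by
    rw [← Fintype.card_pos_iff, hS]; positivity
  obtain ⟨a₀⟩ := hne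
  set f : (S → Fin d) → Finset S := fun c => (univ.filter fun a => c a = c a₀).erase a₀ with hf
  have hcard : ∀ c ∈ P, (f c).card = d - 1 := by
    intro c hc
    rw [hf]
    simp only
    rw [Finset.card_erase_of_mem (by simp), hpart c hc (c a₀)]
  have hdisj : ∀ c ∈ P, ∀ c' ∈ P, c ≠ c' → Disjoint (f c) (f c') := by
    intro c hc c' hc' hcc
    rw [Finset.disjoint_left]
    intro x hx hx'
    simp only [hf, Finset.mem_erase, Finset.mem_filter, Finset.mem_univ, true_and] at hx hx'
    have h1 := hov c hc c' hc' hcc (c a₀) (c' a₀)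
    have hsub : ({a₀, x} : Finset S) ⊆ univ.filter fun a => c a = c a₀ ∧ c' a = c' a₀ := by
      intro y hy
      simp only [Finset.mem_insert, Finset.mem_singleton] at hy
      rcases hy with rfl | rfl
      · simp
      · simp [hx.2, hx'.2]
    have h2 : ({a₀, x} : Finset S).card = 2 := by
      rw [Finset.card_insert_of_notMem (by simp [Ne.symm hx.1]), Finset.card_singleton]
    have := Finset.card_le_card hsub
    omega
  have key : P.card * (d - 1) ≤ d ^ 2 - 1 := by
    have h1 : (P.biUnion f).card = ∑ c ∈ P, (f c).card := Finset.card_biUnion hdisj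
    have h2 : ∑ c ∈ P, (f c).card = P.card * (d - 1) := by
      rw [Finset.sum_congr rfl hcard, Finset.sum_const, smul_eq_mul]
    have h3 : P.biUnion f ⊆ univ.erase a₀ := by
      intro x hx
      simp only [Finset.mem_biUnion] at hx
      obtain ⟨c, hc, hxc⟩ := hx
      simp only [hf, Finset.mem_erase, Finset.mem_filter] at hxc
      simp [hxc.1]
    have h4 := Finset.card_le_card h3
    rw [Finset.card_erase_of_mem (Finset.mem_univ _), Finset.card_univ, hS] at h4
    omega
  have h5 : d ^ 2 = (d + 1) * (d - 1) + 1 := by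
    cases d with
    | zero => omega
    | succ n => simp [Nat.add_sub_cancel]; ring
  exact Nat.le_of_mul_le_mul_right (by omega) (by omega : 0 < d - 1)
end

section
/- Let d ≥ 1, let G be a SIC POVM on ℂ^d, and let n ≥ 3. For k = 1,…,n let m_k ≥ 1 and let c_k : Fin (d²) → Fin m_k be a surjection (so the fibers of c_k partition Fin (d²) into m_k nonempty bins), and define E^k(ν) = Σ_{i : c_k i = ν} G i. Assume that for all k ≠ ℓ and all ν ∈ Fin m_k, μ ∈ Fin m_ℓ one has Tr(E^k(ν) · E^ℓ(μ)) = 1/d. Then m_k = d for every k, every fiber of every c_k has cardinality exactly d (so each c_k is a d-partition), and for all k ≠ ℓ the partitions c_k and c_ℓ share the 1-overlap property: |{i : c_k i = ν ∧ c_ℓ i = μ}| = 1 for all ν, μ. -/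
/-!
For a SIC POVM, `Tr((∑_{i ∈ A} G i) (∑_{j ∈ B} G j)) = (|A| |B| + d |A ∩ B|) / (d² (d + 1))`, so each
unbiasedness condition becomes the counting identity `d |A ∩ B| + |A| |B| = d (d + 1)`. Summing it
over the bins `B` of a second partition `c_l` shows that every bin of `c_k` has exactly `m_l`
elements, hence `m_k m_l = d²` whenever `k ≠ l`. With at least three partitions this forces every
`m_k = d`, and the identity then reads `d |A ∩ B| + d² = d (d + 1)`, i.e. `|A ∩ B| = 1`.
-/

open Matrix Finset
open scoped ComplexOrder

namespace IsSICPOVM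

variable {d : ℕ} {G : Fin (d ^ 2) → Matrix (Fin d) (Fin d) ℂ}

theorem trace_mul (hG : IsSICPOVM d G) (i j : Fin (d ^ 2)) :
    (G i * G j).trace = (1 + d * if i = j then 1 else 0) / ((d : ℂ) ^ 2 * (d + 1)) := by
  obtain ⟨-, -, hoff, hdiag⟩ := hG
  by_cases hij : i = j
  · subst hij
    have hd1 : (d : ℂ) + 1 ≠ 0 := by norm_cast
    rw [hdiag, if_pos rfl, mul_one, add_comm, mul_comm _ ((d : ℂ) + 1), ← div_div, div_self hd1]
  · simp [hij, hoff i j hij]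

theorem trace_sum_mul_sum (hG : IsSICPOVM d G) (A B : Finset (Fin (d ^ 2))) :
    ((∑ i ∈ A, G i) * ∑ j ∈ B, G j).trace
      = (#A * #B + d * #(A ∩ B)) / ((d : ℂ) ^ 2 * (d + 1)) := by
  simp_rw [sum_mul_sum, trace_sum, hG.trace_mul, ← sum_div, sum_add_distrib, ← mul_sum]
  simp only [sum_const, nsmul_eq_mul, mul_one, sum_ite_eq, sum_boole, filter_mem_eq_inter]

theorem card_inter_mul_add_card_mul_card (hG : IsSICPOVM d G) (hd : d ≠ 0)
    {A B : Finset (Fin (d ^ 2))}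
    (hAB : ((∑ i ∈ A, G i) * ∑ j ∈ B, G j).trace = 1 / d) :
    #(A ∩ B) * d + #A * #B = d * (d + 1) := by
  rw [hG.trace_sum_mul_sum] at hAB
  have hd' : (d : ℂ) ≠ 0 := by exact_mod_cast hd
  have hd1 : (d : ℂ) + 1 ≠ 0 := by norm_cast
  field_simp at hAB
  have hcast : ((#(A ∩ B) * d + #A * #B : ℕ) : ℂ) = (d * (d + 1) : ℕ) := by
    push_cast
    linear_combination hAB
  exact_mod_cast hcast

end IsSICPOVM

theorem card_fiber_eq_card_of_overlaps {α β γ : Type*} [Fintype α] [Fintype γ] [DecidableEq β]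
    [DecidableEq γ] {d : ℕ} (hd : d ≠ 0) (hα : Fintype.card α = d ^ 2) {f : α → β} {g : α → γ}
    (h : ∀ ν μ, #{i | f i = ν ∧ g i = μ} * d + #{i | f i = ν} * #{i | g i = μ} = d * (d + 1))
    (ν : β) : #{i | f i = ν} = Fintype.card γ := by
  have hrow : ∑ μ, #{i | f i = ν ∧ g i = μ} = #{i | f i = ν} := by
    simpa only [filter_filter] using
      (card_eq_sum_card_fiberwise (f := g) (s := {i | f i = ν}) (t := univ) (by simp)).symm
  have hcol : ∑ μ, #{i | g i = μ} = d ^ 2 := by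
    simpa [hα] using (card_eq_sum_card_fiberwise (f := g) (s := univ) (t := univ) (by simp)).symm
  have hsum := sum_congr rfl fun μ (_ : μ ∈ univ) => h ν μ
  rw [sum_add_distrib, ← sum_mul, hrow, ← mul_sum, hcol, sum_const, card_univ, smul_eq_mul] at hsum
  exact Nat.eq_of_mul_eq_mul_right (by positivity : 0 < d * (d + 1)) (by linarith)

theorem card_mul_card_eq_of_overlaps {α β γ : Type*} [Fintype α] [Fintype β] [Fintype γ]
    [DecidableEq β] [DecidableEq γ] {d : ℕ} (hd : d ≠ 0) (hα : Fintype.card α = d ^ 2)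
    {f : α → β} {g : α → γ}
    (h : ∀ ν μ, #{i | f i = ν ∧ g i = μ} * d + #{i | f i = ν} * #{i | g i = μ} = d * (d + 1)) :
    Fintype.card β * Fintype.card γ = d ^ 2 := by
  rw [← hα, ← card_univ (α := α), card_eq_sum_card_fiberwise (f := f) (t := univ) (by simp)]
  simp [card_fiber_eq_card_of_overlaps hd hα h]

theorem eq_of_forall_ne_mul_eq_sq {n d : ℕ} (hn : 2 < n) (hd : d ≠ 0) {m : Fin n → ℕ}
    (h : ∀ k l, k ≠ l → m k * m l = d ^ 2) (k : Fin n) : m k = d := by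
  obtain ⟨l, hlk, -⟩ := Fin.exists_ne_and_ne_of_two_lt k k hn
  obtain ⟨p, hpk, hpl⟩ := Fin.exists_ne_and_ne_of_two_lt k l hn
  have hmp : m p ≠ 0 := left_ne_zero_of_mul ((h p k hpk).symm ▸ pow_ne_zero 2 hd)
  have hkl : m k = m l :=
    Nat.eq_of_mul_eq_mul_right (Nat.pos_of_ne_zero hmp)
      ((h k p hpk.symm).trans (h l p hpl.symm).symm)
  rw [← Nat.pow_left_injective two_ne_zero |>.eq_iff, ← h k l hlk.symm, ← hkl, sq]

theorem stmt8_general (d : ℕ) (hd : 1 ≤ d) (G : Fin (d ^ 2) → Matrix (Fin d) (Fin d) ℂ)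
    (hG : IsSICPOVM d G) (n : ℕ) (hn : 3 ≤ n) (m : Fin n → ℕ)
    (c : (k : Fin n) → Fin (d ^ 2) → Fin (m k))
    (hMU : ∀ k l, k ≠ l → ∀ (ν : Fin (m k)) (μ : Fin (m l)),
      ((∑ i ∈ Finset.univ.filter fun i => c k i = ν, G i) *
        (∑ i ∈ Finset.univ.filter fun i => c l i = μ, G i)).trace = 1 / (d : ℂ)) :
    (∀ k, m k = d) ∧
    (∀ k (ν : Fin (m k)), (Finset.univ.filter fun i => c k i = ν).card = d) ∧
    (∀ k l, k ≠ l → ∀ (ν : Fin (m k)) (μ : Fin (m l)),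
      (Finset.univ.filter fun i => c k i = ν ∧ c l i = μ).card = 1) := by
  have hd0 : d ≠ 0 := Nat.one_le_iff_ne_zero.mp hd
  have hcard : Fintype.card (Fin (d ^ 2)) = d ^ 2 := Fintype.card_fin _
  have hoverlap : ∀ k l, k ≠ l → ∀ ν μ, #{i | c k i = ν ∧ c l i = μ} * d
      + #{i | c k i = ν} * #{i | c l i = μ} = d * (d + 1) := fun k l hkl ν μ => by
    simpa only [filter_and] using hG.card_inter_mul_add_card_mul_card hd0 (hMU k l hkl ν μ)
  have hm : ∀ k, m k = d := eq_of_forall_ne_mul_eq_sq hn hd0 fun k l hkl => by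
    simpa using card_mul_card_eq_of_overlaps hd0 hcard (hoverlap k l hkl)
  have hfiber : ∀ k ν, #{i | c k i = ν} = d := fun k ν => by
    obtain ⟨l, hlk, -⟩ := Fin.exists_ne_and_ne_of_two_lt k k hn
    simpa [hm l] using card_fiber_eq_card_of_overlaps hd0 hcard (hoverlap k l hlk.symm) ν
  refine ⟨hm, hfiber, fun k l hkl ν μ => ?_⟩
  have h := hoverlap k l hkl ν μ
  rw [hfiber, hfiber] at h
  exact Nat.eq_of_mul_eq_mul_right (Nat.pos_of_ne_zero hd0) (by linarith)

theorem stmt8 (d : ℕ) (hd : 1 ≤ d) (G : Fin (d ^ 2) → Matrix (Fin d) (Fin d) ℂ)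
    (hG : IsSICPOVM d G) (n : ℕ) (hn : 3 ≤ n) (m : Fin n → ℕ) (hm : ∀ k, 1 ≤ m k)
    (c : (k : Fin n) → Fin (d ^ 2) → Fin (m k)) (hsurj : ∀ k, Function.Surjective (c k))
    (hMU : ∀ k l, k ≠ l → ∀ (ν : Fin (m k)) (μ : Fin (m l)),
      ((∑ i ∈ Finset.univ.filter fun i => c k i = ν, G i) *
        (∑ i ∈ Finset.univ.filter fun i => c l i = μ, G i)).trace = 1 / (d : ℂ)) :
    (∀ k, m k = d) ∧
    (∀ k (ν : Fin (m k)), (Finset.univ.filter fun i => c k i = ν).card = d) ∧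
    (∀ k l, k ≠ l → ∀ (ν : Fin (m k)) (μ : Fin (m l)),
      (Finset.univ.filter fun i => c k i = ν ∧ c l i = μ).card = 1) :=
  stmt8_general d hd G hG n hn m c hMU
end

section
/- Let d ≥ 2 and let G be a SIC POVM on ℂ^d. Then there exist three d-partitions c₁, c₂, c₃ : Fin (d²) → Fin d, inducing pairwise distinct partitions and pairwise sharing the 1-overlap property, such that the three marginal POVMs E^k(ν) = Σ_{i : c_k i = ν} G i (k = 1,2,3) are pairwise mutually unbiased: Tr(E^k(ν) · E^ℓ(μ)) = 1/d for all k ≠ ℓ and all ν, μ ∈ Fin d. -/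
open Matrix Finset
open scoped ComplexOrder

/-! Identifying the `d²` outcomes with the grid `(ℤ/d)²`, one takes as the three partitions the
rows, the columns and the diagonals `x + y = ν`. Any two of them meet in exactly one point, and for
index sets `A, B` of size `d` meeting in one point the SIC trace relations give
`Tr((∑_A G)(∑_B G)) = 1/d² + (d² - 1)/(d²(d + 1)) = 1/d`. -/

section Partitions

variable {S : Type*} [Fintype S] [DecidableEq S] {d : ℕ} {c c' : S → Fin d}

theorem oneOverlap_of_bijective (h : Function.Bijective fun a => (c a, c' a)) :
    OneOverlap c c' := by
  intro ν μ
  let e := Equiv.ofBijective _ h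
  refine Finset.card_eq_one.mpr ⟨e.symm (ν, μ), ?_⟩
  ext a
  simp [Equiv.eq_symm_apply, e, Prod.ext_iff]

theorem OneOverlap.isDPartition (h : OneOverlap c c') : IsDPartition d c := by
  intro ν
  rw [Finset.card_eq_sum_card_fiberwise (f := c') (t := Finset.univ) (fun _ _ => mem_univ _)]
  simp only [Finset.filter_filter, h ν, Finset.sum_const, Finset.card_univ, Fintype.card_fin,
    smul_eq_mul, mul_one]

theorem OneOverlap.not_sameFibers (h : OneOverlap c c') (hd : 2 ≤ d) : ¬ SameFibers c c' := by
  intro hsame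
  let zero : Fin d := ⟨0, by omega⟩
  let one : Fin d := ⟨1, by omega⟩
  obtain ⟨a, ha⟩ := Finset.card_pos.mp (h zero zero ▸ one_pos)
  obtain ⟨b, hb⟩ := Finset.card_pos.mp (h zero one ▸ one_pos)
  simp only [Finset.mem_filter, Finset.mem_univ, true_and] at ha hb
  have : c' a = c' b := (hsame a b).mp (ha.1.trans hb.1.symm)
  rw [ha.2, hb.2] at this
  exact absurd (congrArg Fin.val this) (by simp [zero, one])

end Partitions

theorem trace_sum_mul_sum_of_trace_mul {ι n R : Type*} [DecidableEq ι] [Fintype n] [Ring R]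
    {G : ι → Matrix n n R} {a b : R} (hoff : ∀ i j, i ≠ j → (G i * G j).trace = b)
    (hdiag : ∀ i, (G i * G i).trace = a) (A B : Finset ι) :
    ((∑ i ∈ A, G i) * (∑ j ∈ B, G j)).trace = (#A : R) * #B * b + #(A ∩ B) * (a - b) := by
  have hpair : ∀ i j, (G i * G j).trace = b + if i = j then a - b else 0 := by
    intro i j
    split_ifs with hij
    · rw [hij, hdiag]; abel
    · rw [hoff i j hij, add_zero]
  simp only [Finset.sum_mul_sum, Matrix.trace_sum, hpair, Finset.sum_add_distrib,
    Finset.sum_ite_eq, Finset.sum_const, Finset.sum_ite_mem, nsmul_eq_mul]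
  rw [mul_assoc]

theorem IsSICPOVM.trace_sum_mul_sum_eq_inv {d : ℕ} (hd : d ≠ 0)
    {G : Fin (d ^ 2) → Matrix (Fin d) (Fin d) ℂ} (hG : IsSICPOVM d G) {A B : Finset (Fin (d ^ 2))}
    (hA : #A = d) (hB : #B = d) (hAB : #(A ∩ B) = 1) :
    ((∑ i ∈ A, G i) * (∑ j ∈ B, G j)).trace = 1 / (d : ℂ) := by
  rw [trace_sum_mul_sum_of_trace_mul hG.2.2.1 hG.2.2.2, hA, hB, hAB]
  have : (d : ℂ) + 1 ≠ 0 := by exact_mod_cast d.succ_ne_zero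
  field_simp
  push_cast
  ring

def gridLines (d : ℕ) [NeZero d] : Fin 3 → Fin d × Fin d → Fin d
  | 0 => Prod.fst
  | 1 => Prod.snd
  | 2 => fun p => p.1 + p.2

theorem gridLines_pair_injective {d : ℕ} [NeZero d] {k l : Fin 3} (hkl : k ≠ l) :
    Function.Injective fun p => (gridLines d k p, gridLines d l p) := by
  rintro ⟨x, y⟩ ⟨x', y'⟩ h
  fin_cases k <;> fin_cases l <;> simp only [gridLines, Prod.mk.injEq] at h ⊢ <;>
    obtain ⟨h1, h2⟩ := h <;> subst_vars <;> simp_all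

theorem stmt9 (d : ℕ) (hd : 2 ≤ d) (G : Fin (d ^ 2) → Matrix (Fin d) (Fin d) ℂ)
    (hG : IsSICPOVM d G) :
    ∃ c : Fin 3 → Fin (d ^ 2) → Fin d,
      (∀ k, IsDPartition d (c k)) ∧
      (∀ k l, k ≠ l → ¬ SameFibers (c k) (c l)) ∧
      (∀ k l, k ≠ l → OneOverlap (c k) (c l)) ∧
      (∀ k l, k ≠ l → ∀ ν μ : Fin d,
        ((∑ i ∈ Finset.univ.filter fun i => c k i = ν, G i) *
          (∑ i ∈ Finset.univ.filter fun i => c l i = μ, G i)).trace = 1 / (d : ℂ)) := by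
  have : NeZero d := ⟨by omega⟩
  let e : Fin (d ^ 2) ≃ Fin d × Fin d := (finCongr (pow_two d)).trans finProdFinEquiv.symm
  let c k i := gridLines d k (e i)
  have hover : ∀ k l, k ≠ l → OneOverlap (c k) (c l) := fun k l hkl =>
    oneOverlap_of_bijective <|
      (Finite.injective_iff_bijective.mp (gridLines_pair_injective hkl)).comp e.bijective
  have hpart : ∀ k, IsDPartition d (c k) := fun k =>
    (hover k (k + 1) (by fin_cases k <;> decide)).isDPartition
  refine ⟨c, hpart, fun k l hkl => (hover k l hkl).not_sameFibers hd, hover, ?_⟩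
  intro k l hkl ν μ
  refine hG.trace_sum_mul_sum_eq_inv (by omega) (hpart k ν) (hpart l μ) ?_
  rw [← Finset.filter_and]
  exact hover k l hkl ν μ
end

section
/- Let d ≥ 1. Let P, Q : Fin d → Matrix (Fin d) (Fin d) ℂ be two rank-one projection-valued measures: each P i and Q j is a Hermitian idempotent of trace 1, P i · P j = 0 and Q i · Q j = 0 for i ≠ j, and Σ_i P i = I = Σ_j Q j. Let λ, κ : Fin d → Fin d → ℝ satisfy, for each of λ and κ: row sums equal 1 (Σ_i λ ν i = 1 for all ν), Σ_i (λ ν i)² = 2/(d+1) for all ν, and Σ_i λ ν i · λ μ i = 1/(d+1) for all ν ≠ μ. Define E ν = Σ_i λ ν i • P i and F μ = Σ_j κ μ j • Q j. Then (Tr(E ν · F μ) = 1/d for all ν, μ) if and only if (Tr(P i · Q j) = 1/d for all i, j). -/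
open Matrix

/-- A rank-one projection-valued measure with `d` outcomes on `ℂ^d`: each element is a
Hermitian idempotent of trace one, distinct elements are orthogonal, and the elements sum
to the identity. -/
def IsRankOnePVM (d : ℕ) (P : Fin d → Matrix (Fin d) (Fin d) ℂ) : Prop :=
  (∀ i, (P i).IsHermitian) ∧ (∀ i, P i * P i = P i) ∧ (∀ i, (P i).trace = 1) ∧
    (∀ i j, i ≠ j → P i * P j = 0) ∧ (∑ i, P i = 1)

/-- The simplex conditions on the rows of the smearing matrix `λ`. -/
def SimplexRows (d : ℕ) (lam : Fin d → Fin d → ℝ) : Prop :=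
  (∀ ν, ∑ i, lam ν i = 1) ∧ (∀ ν, ∑ i, (lam ν i) ^ 2 = 2 / ((d : ℝ) + 1)) ∧
    (∀ ν μ, ν ≠ μ → ∑ i, lam ν i * lam μ i = 1 / ((d : ℝ) + 1))

/-- The complex matrix of a simplex-rows family has a right inverse. -/
lemma simplex_right_inv (d : ℕ) (lam : Fin d → Fin d → ℝ) (h : SimplexRows d lam) :
    ∃ C : Matrix (Fin d) (Fin d) ℂ,
      (Matrix.of fun ν i => ((lam ν i : ℂ))) * C = 1 := by
  set L : Matrix (Fin d) (Fin d) ℂ := Matrix.of fun ν i => ((lam ν i : ℂ)) with hL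
  set J : Matrix (Fin d) (Fin d) ℂ := Matrix.of fun _ _ => 1 with hJ
  have hd1 : ((d : ℂ) + 1) ≠ 0 := by
    have := Nat.cast_add_one_ne_zero (R := ℂ) d
    push_cast at this
    exact this
  have hG : L * Lᵀ = ((d:ℂ)+1)⁻¹ • (1 + J) := by
    ext ν μ
    simp only [Matrix.mul_apply, Matrix.transpose_apply, hL, hJ, Matrix.of_apply,
      Matrix.smul_apply, Matrix.add_apply, Matrix.one_apply, smul_eq_mul]
    by_cases hnm : ν = μ
    · subst hnm
      have hc : ∑ i, (lam ν i : ℂ) * (lam ν i : ℂ) = ((2:ℂ) / ((d:ℂ)+1)) := by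
        have : ((∑ i, (lam ν i)^2 : ℝ) : ℂ) = ((2 / ((d:ℝ)+1) : ℝ) : ℂ) :=
          congrArg Complex.ofReal (h.2.1 ν)
        push_cast at this
        simpa [pow_two] using this
      rw [hc]
      simp
      field_simp
      norm_num
    · have hc : ∑ i, (lam ν i : ℂ) * (lam μ i : ℂ) = ((1:ℂ) / ((d:ℂ)+1)) := by
        have : ((∑ i, lam ν i * lam μ i : ℝ) : ℂ) = ((1 / ((d:ℝ)+1) : ℝ) : ℂ) :=
          congrArg Complex.ofReal (h.2.2 ν μ hnm)
        push_cast at this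
        simpa using this
      rw [hc]
      simp [hnm]
  have hJJ : J * J = (d : ℂ) • J := by
    ext i j
    simp [hJ, Matrix.mul_apply, Matrix.smul_apply, Finset.card_fin]
  refine ⟨Lᵀ * (((d:ℂ)+1) • 1 - J), ?_⟩
  rw [← mul_assoc, hG]
  rw [Matrix.smul_mul, add_mul, mul_sub, mul_sub, Matrix.mul_smul, Matrix.mul_smul,
    one_mul, mul_one, hJJ]
  ext i j
  simp only [Matrix.smul_apply, Matrix.sub_apply, Matrix.add_apply, Matrix.one_apply, hJ,
    Matrix.of_apply, smul_eq_mul]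
  by_cases hij : i = j <;> simp [hij] <;> field_simp

theorem stmt11 (d : ℕ) (hd : 1 ≤ d) (P Q : Fin d → Matrix (Fin d) (Fin d) ℂ)
    (hP : IsRankOnePVM d P) (hQ : IsRankOnePVM d Q)
    (lam kap : Fin d → Fin d → ℝ) (hlam : SimplexRows d lam) (hkap : SimplexRows d kap) :
    (∀ ν μ : Fin d,
        ((∑ i, lam ν i • P i) * (∑ j, kap μ j • Q j)).trace = 1 / (d : ℂ)) ↔
    (∀ i j : Fin d, (P i * Q j).trace = 1 / (d : ℂ)) := by
  classical
  have expand : ∀ ν μ, ((∑ i, lam ν i • P i) * (∑ j, kap μ j • Q j)).trace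
      = ∑ i, ∑ j, (lam ν i : ℂ) * (kap μ j : ℂ) * (P i * Q j).trace := by
    intro ν μ
    rw [Finset.sum_mul_sum, Matrix.trace_sum]
    refine Finset.sum_congr rfl fun i _ => ?_
    rw [Matrix.trace_sum]
    refine Finset.sum_congr rfl fun j _ => ?_
    rw [smul_mul_assoc, mul_smul_comm, Matrix.trace_smul, Matrix.trace_smul,
      Complex.real_smul, Complex.real_smul]
    ring
  have hsumL : ∀ ν, ∑ i, ((lam ν i : ℂ)) = 1 := by
    intro ν
    have := congrArg Complex.ofReal (hlam.1 ν)
    push_cast at this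
    exact this
  have hsumK : ∀ μ, ∑ j, ((kap μ j : ℂ)) = 1 := by
    intro μ
    have := congrArg Complex.ofReal (hkap.1 μ)
    push_cast at this
    exact this
  constructor
  · intro h i j
    set L : Matrix (Fin d) (Fin d) ℂ := Matrix.of fun ν i => ((lam ν i : ℂ)) with hLdef
    set K : Matrix (Fin d) (Fin d) ℂ := Matrix.of fun μ j => ((kap μ j : ℂ)) with hKdef
    set M : Matrix (Fin d) (Fin d) ℂ :=
      Matrix.of fun i j => (P i * Q j).trace - 1 / (d : ℂ) with hMdef
    have hLMK : L * M * Kᵀ = 0 := by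
      ext ν μ
      have hexp := (expand ν μ).symm.trans (h ν μ)
      simp only [Matrix.mul_apply, Matrix.transpose_apply, hLdef, hKdef, hMdef,
        Matrix.of_apply, Matrix.zero_apply]
      have : ∑ j', (∑ i', (lam ν i' : ℂ) * ((P i' * Q j').trace - 1 / (d:ℂ))) * (kap μ j' : ℂ)
          = (∑ i', ∑ j', (lam ν i' : ℂ) * (kap μ j' : ℂ) * (P i' * Q j').trace)
            - (∑ i', (lam ν i' : ℂ)) * (∑ j', (kap μ j' : ℂ)) * (1 / (d:ℂ)) := by
        rw [Finset.sum_mul_sum]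
        simp only [mul_sub, sub_mul, Finset.sum_sub_distrib, Finset.sum_mul, Finset.mul_sum]
        rw [Finset.sum_comm]
        congr 1
        · exact Finset.sum_congr rfl fun j' _ => Finset.sum_congr rfl fun i' _ => by ring
        · rw [Finset.sum_comm]
          exact Finset.sum_congr rfl fun j' _ => Finset.sum_congr rfl fun i' _ => by ring
      rw [this, hexp, hsumL, hsumK]
      ring
    obtain ⟨C, hC⟩ := simplex_right_inv d lam hlam
    obtain ⟨D, hD⟩ := simplex_right_inv d kap hkap
    have hC' : C * L = 1 := mul_eq_one_comm.mp hC
    have hD' : D * K = 1 := mul_eq_one_comm.mp hD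
    have hM0 : M = 0 := by
      have h1 : M * Kᵀ = 0 := by
        calc M * Kᵀ = (C * L) * (M * Kᵀ) := by rw [hC', one_mul]
        _ = C * (L * M * Kᵀ) := by noncomm_ring
        _ = 0 := by rw [hLMK, mul_zero]
      calc M = M * (Kᵀ * Dᵀ) := by
              rw [← Matrix.transpose_mul, hD', Matrix.transpose_one, mul_one]
        _ = (M * Kᵀ) * Dᵀ := by rw [mul_assoc]
        _ = 0 := by rw [h1, zero_mul]
    have := congrFun (congrFun hM0 i) j
    simp only [hMdef, Matrix.of_apply, Matrix.zero_apply, sub_eq_zero] at this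
    exact this
  · intro h ν μ
    rw [expand]
    have : ∀ i j : Fin d, (lam ν i : ℂ) * (kap μ j : ℂ) * (P i * Q j).trace
        = (lam ν i : ℂ) * ((kap μ j : ℂ) * (1 / (d:ℂ))) := by
      intro i j; rw [h i j]; ring
    simp_rw [this, ← Finset.mul_sum, ← Finset.sum_mul, hsumK, hsumL]
    ring
end

section
/- Let d ≥ 1 and let P be a finite set of functions from Fin (d+1) to Fin d such that any two distinct p, q ∈ P agree in exactly one coordinate: |{k ∈ Fin (d+1) : p k = q k}| = 1. Then |P| ≤ d². -/
open Finset

theorem stmt12 (d : ℕ) (hd : 1 ≤ d) (P : Finset (Fin (d + 1) → Fin d))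
    (hov : ∀ p ∈ P, ∀ q ∈ P, p ≠ q →
      (Finset.univ.filter fun k : Fin (d + 1) => p k = q k).card = 1) :
    P.card ≤ d ^ 2 := by
  have h2 : 2 ≤ d + 1 := by omega
  have hinj : Set.InjOn (fun p : Fin (d + 1) → Fin d => (p ⟨0, by omega⟩, p ⟨1, by omega⟩)) P := by
    intro p hp q hq hpq
    by_contra hne
    have hcard := hov p hp q hq hne
    have hsub : ({⟨0, by omega⟩, ⟨1, by omega⟩} : Finset (Fin (d+1))) ⊆
        Finset.univ.filter fun k : Fin (d + 1) => p k = q k := by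
      intro k hk
      simp only [Finset.mem_insert, Finset.mem_singleton] at hk
      simp only [Finset.mem_filter, Finset.mem_univ, true_and]
      rcases hk with rfl | rfl
      · exact (Prod.mk.injEq _ _ _ _ ▸ hpq).1
      · exact (Prod.mk.injEq _ _ _ _ ▸ hpq).2
    have : ({⟨0, by omega⟩, ⟨1, by omega⟩} : Finset (Fin (d+1))).card = 2 := by
      rw [Finset.card_insert_of_notMem, Finset.card_singleton]
      simp [Fin.ext_iff]
    have := Finset.card_le_card hsub
    omega
  calc P.card ≤ Fintype.card (Fin d × Fin d) := Finset.card_le_card_of_injOn _ (fun a _ => Finset.mem_univ _) hinj |>.trans (by simp)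
    _ = d ^ 2 := by simp [sq]
end

section
/- Let d ≥ 1 and let c : Fin (d+1) → (Fin d × Fin d) → Fin d be a family of d+1 d-partitions of Fin d × Fin d such that for all k ≠ ℓ and all ν, μ ∈ Fin d, |{a : c k a = ν ∧ c ℓ a = μ}| = 1 (pairwise 1-overlap). For each a ∈ Fin d × Fin d define the path p_a : Fin (d+1) → Fin d by p_a k = c k a. Then the map a ↦ p_a is injective (giving d² paths), and for any two distinct a, b the paths p_a and p_b agree in exactly one coordinate: |{k : c k a = c k b}| = 1. -/
open Finset

theorem stmt13 (d : ℕ) (hd : 1 ≤ d) (c : Fin (d + 1) → (Fin d × Fin d) → Fin d)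
    (hpart : ∀ k, IsDPartition d (c k))
    (hov : ∀ k l, k ≠ l → OneOverlap (c k) (c l)) :
    Function.Injective (fun (a : Fin d × Fin d) (k : Fin (d + 1)) => c k a) ∧
    (∀ a b : Fin d × Fin d, a ≠ b →
      (Finset.univ.filter fun k : Fin (d + 1) => c k a = c k b).card = 1) := by
  have key : ∀ a b : Fin d × Fin d, a ≠ b →
      (Finset.univ.filter fun k : Fin (d + 1) => c k a = c k b).card ≤ 1 := by
    intro a b hab
    by_contra h
    push_neg at h
    rw [Finset.one_lt_card] at h
    obtain ⟨k, hk, l, hl, hkl⟩ := h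
    simp only [mem_filter, mem_univ, true_and] at hk hl
    have h1 := hov k l hkl (c k a) (c l a)
    rw [Finset.card_eq_one] at h1
    obtain ⟨x, hx⟩ := h1
    have ha : a ∈ Finset.univ.filter fun z => c k z = c k a ∧ c l z = c l a := by simp
    have hb : b ∈ Finset.univ.filter fun z => c k z = c k a ∧ c l z = c l a := by
      simp [← hk, ← hl]
    rw [hx, Finset.mem_singleton] at ha hb
    exact hab (ha.trans hb.symm)
  constructor
  · intro a b hab
    by_contra hne
    have h2 := key a b hne
    have heq : (Finset.univ.filter fun k : Fin (d + 1) => c k a = c k b) = Finset.univ := by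
      ext k; simp [congrFun hab k]
    rw [heq, Finset.card_univ, Fintype.card_fin] at h2
    omega
  · intro a b hab
    set T := (Finset.univ : Finset (Fin d × Fin d)).erase a with hT
    have hTcard : T.card = d * d - 1 := by
      rw [hT, Finset.card_erase_of_mem (Finset.mem_univ a), Finset.card_univ]
      simp [Fintype.card_prod]
    have hsum : ∑ x ∈ T, (Finset.univ.filter fun k : Fin (d + 1) => c k a = c k x).card
        = (d + 1) * (d - 1) := by
      have hswap : ∑ x ∈ T, (Finset.univ.filter fun k : Fin (d + 1) => c k a = c k x).card
          = ∑ k : Fin (d + 1), (T.filter fun x => c k a = c k x).card := by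
        simp only [Finset.card_filter]
        rw [Finset.sum_comm]
      rw [hswap]
      have hfib : ∀ k : Fin (d + 1), (T.filter fun x => c k a = c k x).card = d - 1 := by
        intro k
        have hset : T.filter (fun x => c k a = c k x)
            = (Finset.univ.filter fun x => c k x = c k a).erase a := by
          ext x
          simp only [Finset.mem_filter, Finset.mem_erase, hT, Finset.mem_univ, true_and,
            and_true, eq_comm]
        rw [hset, Finset.card_erase_of_mem (by simp), hpart k (c k a)]
      simp [hfib]
    have hle : ∀ x ∈ T, (Finset.univ.filter fun k : Fin (d + 1) => c k a = c k x).card ≤ 1 := by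
      intro x hx
      exact key a x (by rw [hT] at hx; exact fun h => (Finset.mem_erase.mp hx).1 h.symm)
    have hbT : b ∈ T := Finset.mem_erase.mpr ⟨fun h => hab h.symm, Finset.mem_univ b⟩
    by_contra hne
    have hblt : (Finset.univ.filter fun k : Fin (d + 1) => c k a = c k b).card < 1 := by
      have := hle b hbT; omega
    have hlt : ∑ x ∈ T, (Finset.univ.filter fun k : Fin (d + 1) => c k a = c k x).card
        < ∑ x ∈ T, 1 := Finset.sum_lt_sum hle ⟨b, hbT, hblt⟩
    rw [hsum, Finset.sum_const, smul_eq_mul, mul_one, hTcard] at hlt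
    obtain ⟨e, rfl⟩ : ∃ e, d = e + 1 := ⟨d - 1, by omega⟩
    have hEq : (e + 1) * (e + 1) - 1 = (e + 1 + 1) * (e + 1 - 1) :=
      Nat.sub_eq_of_eq_add (by simp only [Nat.add_sub_cancel]; ring)
    rw [hEq] at hlt
    exact lt_irrefl _ hlt
end

section
/- Let d ≥ 1 and let P be a set of functions from Fin (d+1) to Fin d with |P| = d², such that any two distinct p, q ∈ P agree in exactly one coordinate: |{k : p k = q k}| = 1. Then: (1) for every k ∈ Fin (d+1) and ν ∈ Fin d, |{p ∈ P : p k = ν}| = d; and (2) for all k ≠ ℓ in Fin (d+1) and all ν, μ ∈ Fin d, |{p ∈ P : p k = ν ∧ p ℓ = μ}| = 1. (Thus the fibers of the evaluation maps p ↦ p k give d+1 d-partitions of P pairwise sharing the 1-overlap property.) -/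
open Finset

theorem stmt14 (d : ℕ) (hd : 1 ≤ d) (P : Finset (Fin (d + 1) → Fin d))
    (hcard : P.card = d ^ 2)
    (hov : ∀ p ∈ P, ∀ q ∈ P, p ≠ q →
      (Finset.univ.filter fun k : Fin (d + 1) => p k = q k).card = 1) :
    (∀ (k : Fin (d + 1)) (ν : Fin d), (P.filter fun p => p k = ν).card = d) ∧
    (∀ k l : Fin (d + 1), k ≠ l → ∀ ν μ : Fin d,
      (P.filter fun p => p k = ν ∧ p l = μ).card = 1) := by
  have hinj : ∀ k l : Fin (d+1), k ≠ l → ∀ p ∈ P, ∀ q ∈ P,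
      p k = q k → p l = q l → p = q := by
    intro k l hkl p hp q hq h1 h2
    by_contra hpq
    have hc := hov p hp q hq hpq
    have hsub : ({k, l} : Finset (Fin (d+1))) ⊆ univ.filter fun i => p i = q i := by
      intro i hi
      simp only [mem_insert, mem_singleton] at hi
      rcases hi with rfl | rfl <;> simp [h1, h2]
    have hkl2 : ({k, l} : Finset (Fin (d+1))).card = 2 := by
      rw [card_insert_of_notMem (by simpa using hkl), card_singleton]
    have := card_le_card hsub
    omega
  have key : ∀ k l : Fin (d + 1), k ≠ l → ∀ ν μ : Fin d,
      (P.filter fun p => p k = ν ∧ p l = μ).card = 1 := by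
    intro k l hkl
    have hsum : P.card = ∑ x : Fin d × Fin d, (P.filter fun p => (p k, p l) = x).card :=
      card_eq_sum_card_fiberwise (fun p _ => mem_univ ((p k, p l)))
    have hle : ∀ x : Fin d × Fin d, (P.filter fun p => (p k, p l) = x).card ≤ 1 := by
      rintro ⟨a, b⟩
      apply card_le_one.mpr
      intro p hp q hq
      simp only [mem_filter, Prod.mk.injEq] at hp hq
      exact hinj k l hkl p hp.1 q hq.1 (hp.2.1.trans hq.2.1.symm) (hp.2.2.trans hq.2.2.symm)
    have hall : ∀ x : Fin d × Fin d, (P.filter fun p => (p k, p l) = x).card = 1 := by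
      intro x
      by_contra h
      have hlt : (P.filter fun p => (p k, p l) = x).card < 1 := lt_of_le_of_ne (hle x) h
      have hlt2 : ∑ y : Fin d × Fin d, (P.filter fun p => (p k, p l) = y).card <
          ∑ _y : Fin d × Fin d, 1 :=
        sum_lt_sum (fun y _ => hle y) ⟨x, mem_univ x, hlt⟩
      simp only [sum_const, card_univ, Fintype.card_prod, Fintype.card_fin, smul_eq_mul,
        mul_one] at hlt2
      rw [← hsum, hcard] at hlt2
      nlinarith
    intro ν μ
    have h := hall (ν, μ)
    convert h using 2
    ext p
    simp [Prod.ext_iff]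
  refine ⟨?_, key⟩
  intro k ν
  obtain ⟨l, hkl⟩ : ∃ l : Fin (d+1), k ≠ l := by
    refine ⟨⟨if k.val = 0 then 1 else 0, by split <;> omega⟩, ?_⟩
    intro h
    apply_fun Fin.val at h
    simp only at h
    split at h <;> omega
  have hsum : ((P.filter fun p => p k = ν).card)
      = ∑ μ : Fin d, ((P.filter fun p => p k = ν).filter fun p => p l = μ).card :=
    card_eq_sum_card_fiberwise (fun p _ => mem_univ (p l))
  rw [hsum]
  have heq : ∀ μ : Fin d, ((P.filter fun p => p k = ν).filter fun p => p l = μ) =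
      P.filter fun p => p k = ν ∧ p l = μ := by
    intro μ; ext p; simp [and_assoc]
  simp only [heq, key k l hkl]
  simp
end

section
/- Let d ≥ 1, let n ≥ 1, and let G : Fin (d²) → Matrix (Fin n) (Fin n) ℂ satisfy Σ_i G i = I. Let c : Fin (d+1) → Fin (d²) → Fin d be a family of d+1 d-partitions of Fin (d²) such that for all k ≠ ℓ and all ν, μ ∈ Fin d, |{i : c k i = ν ∧ c ℓ i = μ}| = 1 (pairwise 1-overlap). Define the marginals E^k(ν) = Σ_{i : c k i = ν} G i. Then for every i ∈ Fin (d²): Σ_{k ∈ Fin (d+1)} E^k(c k i) = d • G i + I; equivalently G i = (1/d) • (Σ_k E^k(c k i) − I). -/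
open Matrix Finset

theorem stmt15 (d n : ℕ) (hd : 1 ≤ d) (hn : 1 ≤ n)
    (G : Fin (d ^ 2) → Matrix (Fin n) (Fin n) ℂ) (hsum : ∑ i, G i = 1)
    (c : Fin (d + 1) → Fin (d ^ 2) → Fin d)
    (hpart : ∀ k, IsDPartition d (c k))
    (hov : ∀ k l, k ≠ l → OneOverlap (c k) (c l)) :
    ∀ i : Fin (d ^ 2),
      (∑ k : Fin (d + 1), ∑ j ∈ Finset.univ.filter fun j => c k j = c k i, G j) =
        d • G i + 1 ∧
      G i = ((1 : ℂ) / d) •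
        ((∑ k : Fin (d + 1), ∑ j ∈ Finset.univ.filter fun j => c k j = c k i, G j) - 1) := by
  intro i
  set m : Fin (d ^ 2) → ℕ :=
    fun j => (Finset.univ.filter fun k => c k j = c k i).card with hm
  have hmi : m i = d + 1 := by
    simp [hm]
  have hle : ∀ j, j ≠ i → m j ≤ 1 := by
    intro j hj
    by_contra h
    push_neg at h
    rw [Finset.one_lt_card] at h
    obtain ⟨k, hk, l, hl, hkl⟩ := h
    simp only [Finset.mem_filter, Finset.mem_univ, true_and] at hk hl
    have h1 := hov k l hkl (c k i) (c l i)
    have hi : i ∈ Finset.univ.filter fun a => c k a = c k i ∧ c l a = c l i := by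
      simp
    have hjmem : j ∈ Finset.univ.filter fun a => c k a = c k i ∧ c l a = c l i := by
      simp [hk, hl]
    have := Finset.one_lt_card.mpr ⟨i, hi, j, hjmem, fun h => hj h.symm⟩
    omega
  have hsum_m : ∑ j, m j = (d + 1) * d := by
    have : ∀ j : Fin (d ^ 2), m j = ∑ k : Fin (d + 1),
        if c k j = c k i then 1 else 0 := by
      intro j
      simp only [hm]
      rw [Finset.card_filter]
    simp_rw [this]
    rw [Finset.sum_comm]
    have : ∀ k : Fin (d + 1),
        (∑ j : Fin (d ^ 2), if c k j = c k i then 1 else 0) = d := by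
      intro k
      rw [← Finset.card_filter]
      exact hpart k (c k i)
    simp_rw [this]
    simp [Finset.sum_const, mul_comm]
  have hone : ∀ j, j ≠ i → m j = 1 := by
    intro j hj
    by_contra h
    have hj0 : m j = 0 := by have := hle j hj; omega
    have hdd : d ^ 2 = d * d := sq d
    have hmul : (d + 1) * d = d * d + d := by ring
    have htot := Finset.add_sum_erase Finset.univ m (Finset.mem_univ i)
    rw [hmi, hsum_m] at htot
    have hcard : (Finset.univ.erase i : Finset (Fin (d ^ 2))).card = d ^ 2 - 1 := by
      simp
    have hlt : ∑ x ∈ Finset.univ.erase i, m x <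
        ∑ _x ∈ Finset.univ.erase i, 1 := by
      apply Finset.sum_lt_sum
      · intro x hx
        exact hle x (Finset.mem_erase.mp hx).1
      · exact ⟨j, Finset.mem_erase.mpr ⟨hj, Finset.mem_univ j⟩, by omega⟩
    rw [Finset.sum_const, smul_eq_mul, mul_one, hcard] at hlt
    omega
  have key : (∑ k : Fin (d + 1),
      ∑ j ∈ Finset.univ.filter fun j => c k j = c k i, G j) = d • G i + 1 := by
    have h1 : ∀ k : Fin (d + 1),
        (∑ j ∈ Finset.univ.filter fun j => c k j = c k i, G j) =
        ∑ j : Fin (d ^ 2), if c k j = c k i then G j else 0 := by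
      intro k; rw [Finset.sum_filter]
    simp_rw [h1]
    rw [Finset.sum_comm]
    have h2 : ∀ j : Fin (d ^ 2),
        (∑ k : Fin (d + 1), if c k j = c k i then G j else 0) = m j • G j := by
      intro j
      rw [← Finset.sum_filter, Finset.sum_const, hm]
    simp_rw [h2]
    have h3 : ∀ j : Fin (d ^ 2),
        m j • G j = G j + (if j = i then d • G j else 0) := by
      intro j
      by_cases hji : j = i
      · subst hji
        rw [hmi, if_pos rfl, succ_nsmul, add_comm]
      · rw [hone j hji, one_smul, if_neg hji, add_zero]
    simp_rw [h3]
    rw [Finset.sum_add_distrib, hsum, Finset.sum_ite_eq' Finset.univ i]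
    simp [add_comm]
  refine ⟨key, ?_⟩
  rw [key]
  have hdne : (d : ℂ) ≠ 0 := Nat.cast_ne_zero.mpr (by omega)
  rw [add_sub_cancel_right, ← Nat.cast_smul_eq_nsmul ℂ, smul_smul,
    one_div, inv_mul_cancel₀ hdne, one_smul]
end

section
/- Let d ≥ 1 and let E : Fin (d+1) → Fin d → Matrix (Fin d) (Fin d) ℂ be a family of d+1 POVMs on ℂ^d (each E k ν is positive semidefinite and Σ_ν E k ν = I) satisfying: Tr(E k μ · E ℓ ν) = 1/d for all k ≠ ℓ and all μ, ν (mutual unbiasedness), and Tr(E k μ · E k ν) = 1/(d+1) for all k and all μ ≠ ν. Let π : Fin (d²) → Fin (d+1) → Fin d be a family of d² paths such that: (a) for all i ≠ j, |{k : π i k = π j k}| = 1 (pairwise 1-overlap of paths); and (b) for every k and μ, |{i : π i k = μ}| = d. Define G i = (1/d) • (Σ_{k ∈ Fin (d+1)} E k (π i k) − I). Then: (1) each G i is Hermitian; (2) Σ_{i ∈ Fin (d²)} G i = I; (3) Tr(G i) = 1/d for all i; (4) Tr((G i)²) = 1/d² for all i; (5) Tr(G i · G j) = 1/(d²(d+1))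 for all i ≠ j. Consequently G is a SIC POVM if and only if every G i is positive semidefinite. -/
open Matrix Finset
open scoped ComplexOrder

/-- The operators `G i = (1/d) • (Σ_k E k (π i k) − I)` built from the family of POVMs `E`
along the paths `π`. -/
noncomputable def pathOperators (d : ℕ) (E : Fin (d + 1) → Fin d → Matrix (Fin d) (Fin d) ℂ)
    (π : Fin (d ^ 2) → Fin (d + 1) → Fin d) : Fin (d ^ 2) → Matrix (Fin d) (Fin d) ℂ :=
  fun i => ((1 : ℂ) / d) • ((∑ k : Fin (d + 1), E k (π i k)) - 1)

theorem stmt16 (d : ℕ) (hd : 1 ≤ d) (E : Fin (d + 1) → Fin d → Matrix (Fin d) (Fin d) ℂ)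
    (hpos : ∀ k ν, (E k ν).PosSemidef) (hsum : ∀ k, ∑ ν, E k ν = 1)
    (hMU : ∀ k l, k ≠ l → ∀ μ ν, (E k μ * E l ν).trace = 1 / (d : ℂ))
    (hself : ∀ k, ∀ μ ν, μ ≠ ν → (E k μ * E k ν).trace = 1 / ((d : ℂ) + 1))
    (π : Fin (d ^ 2) → Fin (d + 1) → Fin d)
    (hπov : ∀ i j, i ≠ j →
      (Finset.univ.filter fun k : Fin (d + 1) => π i k = π j k).card = 1)
    (hπfib : ∀ (k : Fin (d + 1)) (μ : Fin d),
      (Finset.univ.filter fun i => π i k = μ).card = d) :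
    (∀ i, (pathOperators d E π i).IsHermitian) ∧
    (∑ i, pathOperators d E π i = 1) ∧
    (∀ i, (pathOperators d E π i).trace = 1 / (d : ℂ)) ∧
    (∀ i, (pathOperators d E π i * pathOperators d E π i).trace = 1 / (d : ℂ) ^ 2) ∧
    (∀ i j, i ≠ j →
      (pathOperators d E π i * pathOperators d E π j).trace =
        1 / ((d : ℂ) ^ 2 * ((d : ℂ) + 1))) ∧
    (IsSICPOVM d (pathOperators d E π) ↔ ∀ i, (pathOperators d E π i).PosSemidef) := by
  have hd0 : (d : ℂ) ≠ 0 := Nat.cast_ne_zero.2 (by omega)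
  have hd1 : (d : ℂ) + 1 ≠ 0 := by
    have : ((d + 1 : ℕ) : ℂ) ≠ 0 := Nat.cast_ne_zero.2 (by omega)
    push_cast at this; exact this
  -- trace of each effect is 1
  have htr1 : ∀ k μ, (E k μ).trace = 1 := by
    intro k μ
    have : Nontrivial (Fin (d + 1)) := by
      rw [Fin.nontrivial_iff_two_le]; omega
    obtain ⟨l, hl⟩ := exists_ne k
    have : (E k μ).trace = (E k μ * ∑ ν, E l ν).trace := by rw [hsum l, mul_one]
    rw [this, Finset.mul_sum, trace_sum,
      Finset.sum_congr rfl fun ν _ => hMU k l (Ne.symm hl) μ ν]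
    simp only [Finset.sum_const, Finset.card_univ, Fintype.card_fin, nsmul_eq_mul]
    field_simp
  -- trace of square of each effect
  have htrsq : ∀ (k : Fin (d + 1)) (μ : Fin d),
      (E k μ * E k μ).trace = 2 / ((d : ℂ) + 1) := by
    intro k μ
    have h1 : (∑ ν, (E k μ * E k ν).trace) = 1 := by
      rw [← trace_sum, ← Finset.mul_sum, hsum k, mul_one, htr1]
    rw [← Finset.add_sum_erase _ _ (Finset.mem_univ μ)] at h1
    have h2 : ∑ ν ∈ Finset.univ.erase μ, (E k μ * E k ν).trace
        = ((d : ℂ) - 1) * (1 / ((d : ℂ) + 1)) := by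
      rw [Finset.sum_congr rfl fun ν hν =>
        hself k μ ν (Ne.symm (Finset.ne_of_mem_erase hν))]
      rw [Finset.sum_const, Finset.card_erase_of_mem (Finset.mem_univ μ),
        Finset.card_univ, Fintype.card_fin, nsmul_eq_mul]
      rw [Nat.cast_sub hd]; norm_num
    rw [h2] at h1
    field_simp at h1 ⊢
    linear_combination h1
  -- trace of S i
  have hTrS : ∀ i, (∑ k, E k (π i k)).trace = (d : ℂ) + 1 := by
    intro i
    rw [trace_sum, Finset.sum_congr rfl fun k _ => htr1 k (π i k)]
    simp [Finset.card_univ]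
  -- mixed trace of sums
  have hSS : ∀ i j, ((∑ k, E k (π i k)) * ∑ l, E l (π j l)).trace
      = (∑ k, (E k (π i k) * E k (π j k)).trace) + ((d : ℂ) + 1) := by
    intro i j
    rw [Finset.sum_mul_sum, trace_sum]
    simp_rw [trace_sum]
    have hrow : ∀ k : Fin (d + 1), ∑ l, (E k (π i k) * E l (π j l)).trace
        = (E k (π i k) * E k (π j k)).trace + 1 := by
      intro k
      rw [← Finset.add_sum_erase _ _ (Finset.mem_univ k)]
      congr 1
      rw [Finset.sum_congr rfl fun l hl =>
        hMU k l (Ne.symm (Finset.ne_of_mem_erase hl)) _ _]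
      rw [Finset.sum_const, Finset.card_erase_of_mem (Finset.mem_univ k),
        Finset.card_univ, Fintype.card_fin, Nat.add_sub_cancel, nsmul_eq_mul]
      field_simp
    rw [Finset.sum_congr rfl fun k _ => hrow k, Finset.sum_add_distrib]
    simp [Finset.card_univ]
  -- diagonal sums
  have hdiag_eq : ∀ i, ∑ k, (E k (π i k) * E k (π i k)).trace = 2 := by
    intro i
    rw [Finset.sum_congr rfl fun k _ => htrsq k (π i k)]
    rw [Finset.sum_const, Finset.card_univ, Fintype.card_fin, nsmul_eq_mul]
    push_cast
    field_simp
  have hdiag_ne : ∀ i j, i ≠ j →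
      ∑ k, (E k (π i k) * E k (π j k)).trace = ((d : ℂ) + 2) / ((d : ℂ) + 1) := by
    intro i j hij
    rw [← Finset.sum_filter_add_sum_filter_not Finset.univ (fun k => π i k = π j k)]
    have h1 : ∑ k ∈ Finset.univ.filter (fun k => π i k = π j k),
        (E k (π i k) * E k (π j k)).trace = 2 / ((d : ℂ) + 1) := by
      have hc : ∀ k ∈ Finset.univ.filter (fun k => π i k = π j k),
          (E k (π i k) * E k (π j k)).trace = 2 / ((d : ℂ) + 1) := fun k hk => by
        rw [(Finset.mem_filter.1 hk).2]; exact htrsq k (π j k)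
      rw [Finset.sum_congr rfl hc, Finset.sum_const, hπov i j hij, one_nsmul]
    have hcard : (Finset.univ.filter fun k => ¬ π i k = π j k).card = d := by
      have := Finset.card_filter_add_card_filter_not
        (s := (Finset.univ : Finset (Fin (d + 1)))) (fun k => π i k = π j k)
      rw [hπov i j hij, Finset.card_univ, Fintype.card_fin] at this
      omega
    have h2 : ∑ k ∈ Finset.univ.filter (fun k => ¬ π i k = π j k),
        (E k (π i k) * E k (π j k)).trace = (d : ℂ) * (1 / ((d : ℂ) + 1)) := by
      rw [Finset.sum_congr rfl (fun k hk =>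
        hself k _ _ ((Finset.mem_filter.1 hk).2))]
      rw [Finset.sum_const, hcard, nsmul_eq_mul]
    rw [h1, h2]
    field_simp
    ring
  -- generic trace of products of path operators
  have hG : ∀ i j, (pathOperators d E π i * pathOperators d E π j).trace
      = ((1 : ℂ) / d) * ((1 : ℂ) / d) *
        (((∑ k, E k (π i k)) * ∑ l, E l (π j l)).trace - ((d : ℂ) + 1) - ((d : ℂ) + 1)
          + (d : ℂ)) := by
    intro i j
    simp only [pathOperators, Matrix.smul_mul, Matrix.mul_smul, Matrix.sub_mul,
      Matrix.mul_sub, Matrix.mul_one, Matrix.one_mul, trace_smul, trace_sub,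
      smul_smul, smul_eq_mul]
    rw [hTrS i, hTrS j, trace_one]
    simp [Fintype.card_fin]
    ring
  have hHerm : ∀ i, (pathOperators d E π i).IsHermitian := by
    intro i
    have h : ∀ k : Fin (d + 1), (E k (π i k))ᴴ = E k (π i k) :=
      fun k => (hpos k (π i k)).isHermitian
    simp only [Matrix.IsHermitian, conjTranspose_smul, conjTranspose_sub,
      conjTranspose_sum, conjTranspose_one, h, pathOperators]
    congr 1
    simp [Complex.star_def, ← Complex.ofReal_natCast]
  have hSum : ∑ i, pathOperators d E π i = 1 := by
    have hk : ∀ k : Fin (d + 1),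
        ∑ i : Fin (d ^ 2), E k (π i k) = (d : ℂ) • (1 : Matrix (Fin d) (Fin d) ℂ) := by
      intro k
      rw [← Finset.sum_fiberwise Finset.univ (fun i => π i k) (fun i => E k (π i k))]
      have hc : ∀ μ : Fin d, ∑ i ∈ Finset.univ.filter (fun i => π i k = μ),
          E k (π i k) = d • E k μ := by
        intro μ
        have hc2 : ∀ i ∈ Finset.univ.filter (fun i => π i k = μ),
            E k (π i k) = E k μ := fun i hi => by rw [(Finset.mem_filter.1 hi).2]
        rw [Finset.sum_congr rfl hc2, Finset.sum_const, hπfib k μ]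
      rw [Finset.sum_congr rfl fun μ _ => hc μ]
      rw [← Finset.smul_sum, hsum k]
      rw [← Nat.cast_smul_eq_nsmul ℂ]
    simp only [pathOperators, ← Finset.smul_sum]
    rw [Finset.sum_sub_distrib, Finset.sum_comm,
      Finset.sum_congr rfl fun k _ => hk k]
    simp only [Finset.sum_const, Finset.card_univ, Fintype.card_fin]
    rw [← Nat.cast_smul_eq_nsmul ℂ (d + 1), ← Nat.cast_smul_eq_nsmul ℂ (d ^ 2),
      smul_smul, ← sub_smul, smul_smul]
    have : (1 : ℂ) / d * (((d : ℕ) + 1 : ℕ) * (d : ℂ) - ((d ^ 2 : ℕ) : ℂ)) = 1 := by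
      push_cast
      field_simp
      ring
    rw [this, one_smul]
  have hTr : ∀ i, (pathOperators d E π i).trace = 1 / (d : ℂ) := by
    intro i
    simp only [pathOperators, trace_smul, trace_sub, hTrS i, trace_one, smul_eq_mul]
    simp [Fintype.card_fin]
  have hSq : ∀ i, (pathOperators d E π i * pathOperators d E π i).trace = 1 / (d : ℂ) ^ 2 := by
    intro i
    rw [hG i i, hSS i i, hdiag_eq i]
    field_simp
    ring
  have hMix : ∀ i j, i ≠ j → (pathOperators d E π i * pathOperators d E π j).trace
      = 1 / ((d : ℂ) ^ 2 * ((d : ℂ) + 1)) := by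
    intro i j hij
    rw [hG i j, hSS i j, hdiag_ne i j hij]
    field_simp
    ring
  exact ⟨hHerm, hSum, hTr, hSq, hMix,
    ⟨fun h => h.1, fun h => ⟨h, hSum, hMix, hSq⟩⟩⟩
end

section
/- Let d ≥ 1 and n ≥ 2. For k = 1,…,n let P^k : Fin d → Matrix (Fin d) (Fin d) ℂ be rank-one projection-valued measures (each P^k i is a Hermitian idempotent of trace 1, P^k i · P^k j = 0 for i ≠ j, and Σ_i P^k i = I) which are pairwise mutually unbiased: Tr(P^k i · P^ℓ j) = 1/d for all k ≠ ℓ and all i, j. For each k let Λ^k : Fin d → Fin d → ℝ have nonnegative entries with column sums 1 (Σ_ν Λ^k ν i = 1 for all i), and define the smeared POVMs E^k ν = Σ_i Λ^k ν i • P^k i. Then the POVMs E^1,…,E^n are pairwise mutually unbiased (Tr(E^k μ · E^ℓ ν) = 1/d for all k ≠ ℓ and all μ, ν) if and only if every element has unit trace: Tr(E^k ν) = 1 for all k, ν (equivalently, every Λ^k is doubly stochastic). -/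
open Matrix

theorem stmt17 (d n : ℕ) (hd : 1 ≤ d) (hn : 2 ≤ n)
    (P : Fin n → Fin d → Matrix (Fin d) (Fin d) ℂ)
    (hPVM : ∀ k, IsRankOnePVM d (P k))
    (hMUB : ∀ k l, k ≠ l → ∀ i j, (P k i * P l j).trace = 1 / (d : ℂ))
    (Λ : Fin n → Fin d → Fin d → ℝ)
    (hΛpos : ∀ k ν i, 0 ≤ Λ k ν i)
    (hΛcol : ∀ k i, ∑ ν, Λ k ν i = 1) :
    (∀ k l, k ≠ l → ∀ μ ν : Fin d,
        ((∑ i, Λ k μ i • P k i) * (∑ j, Λ l ν j • P l j)).trace = 1 / (d : ℂ)) ↔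
    (∀ (k : Fin n) (ν : Fin d), (∑ i, Λ k ν i • P k i).trace = 1) := by
  have hd0 : (d : ℂ) ≠ 0 := by
    have : d ≠ 0 := by omega
    exact_mod_cast this
  have hdR : (d : ℝ) ≠ 0 := by
    have : d ≠ 0 := by omega
    exact_mod_cast this
  have htr : ∀ k ν, (∑ i, Λ k ν i • P k i).trace = ((∑ i, Λ k ν i : ℝ) : ℂ) := by
    intro k ν
    rw [trace_sum]
    simp_rw [trace_smul, (hPVM k).2.2.1]
    push_cast
    simp [Complex.real_smul]
  have hprod : ∀ k l, k ≠ l → ∀ μ ν,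
      ((∑ i, Λ k μ i • P k i) * (∑ j, Λ l ν j • P l j)).trace
        = (((∑ i, Λ k μ i) * (∑ j, Λ l ν j) : ℝ) : ℂ) * (1 / (d : ℂ)) := by
    intro k l hkl μ ν
    rw [Finset.sum_mul_sum, trace_sum]
    simp_rw [trace_sum, smul_mul_assoc, mul_smul_comm, trace_smul, hMUB k l hkl,
      Complex.real_smul]
    push_cast
    rw [Finset.sum_mul_sum, Finset.sum_mul]
    congr 1; ext i
    rw [Finset.sum_mul]
    congr 1; ext j
    ring
  have hrowsum : ∀ k, ∑ ν, ∑ i, Λ k ν i = (d : ℝ) := by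
    intro k
    rw [Finset.sum_comm]
    simp [hΛcol]
  constructor
  · intro h k ν
    rw [htr]
    -- pick l ≠ k
    have h2 : 0 < n := by omega
    obtain ⟨l, hl⟩ : ∃ l : Fin n, l ≠ k := by
      have : Nontrivial (Fin n) := Fin.nontrivial_iff_two_le.mpr hn
      exact exists_ne k
    have key : ∀ μ, (∑ i, Λ k ν i) * (∑ j, Λ l μ j) = 1 := by
      intro μ
      have hh := h k l hl.symm ν μ
      rw [hprod k l hl.symm ν μ] at hh
      have h1 : (((∑ i, Λ k ν i) * (∑ j, Λ l μ j) : ℝ) : ℂ) = 1 := by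
        have hne : (1 / (d : ℂ)) ≠ 0 := one_div_ne_zero hd0
        have := mul_right_cancel₀ hne (hh.trans (one_mul (1 / (d:ℂ))).symm)
        exact this
      exact_mod_cast h1
    have hsum : (∑ i, Λ k ν i) * (d : ℝ) = (d : ℝ) := by
      calc (∑ i, Λ k ν i) * (d : ℝ)
          = (∑ i, Λ k ν i) * ∑ μ, ∑ j, Λ l μ j := by rw [hrowsum]
        _ = ∑ μ, (∑ i, Λ k ν i) * ∑ j, Λ l μ j := by rw [Finset.mul_sum]
        _ = ∑ μ : Fin d, (1 : ℝ) := by simp_rw [key]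
        _ = (d : ℝ) := by simp
    have : (∑ i, Λ k ν i) = 1 := by
      have := mul_right_cancel₀ hdR (hsum.trans (one_mul (d:ℝ)).symm)
      exact this
    rw [this]; norm_num
  · intro h k l hkl μ ν
    rw [hprod k l hkl μ ν]
    have h1 : (∑ i, Λ k μ i) = 1 := by
      have := h k μ; rw [htr] at this; exact_mod_cast this
    have h2 : (∑ j, Λ l ν j) = 1 := by
      have := h l ν; rw [htr] at this; exact_mod_cast this
    rw [h1, h2]; norm_num
end
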